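/- arXiv:2510.01036 — 2 statements merged into one kernel-verified Lean document; each statement's English description precedes it below -/
import Mathlib

section
/- Let (Ω, ℱ, ℙ) be a probability space, (H, 𝒜) a measurable space, and (ε_n)_{n≥1} positive reals with ε_n → 0 and n ε_n² → ∞. For each n, let μ_n be a probability kernel from Ω to H (a possibly data-dependent prior), let Q̃_n, Q_n : Ω × H → [0, ∞) be jointly measurable, let q_n : H → [0, ∞) be measurable, and let S_n ⊆ R_n ⊆ H be measurable. Assume there are constants D₀, D, c, C > 0 and B > C′ > 0 such that, on events of ℙ-probability tending to one as n → ∞: (a) Q̃_n(ω, h) ≤ D₀ Q_n(ω, h) for all h ∈ S_n; (b) sup_{h ∈ S_n} |Q_n(ω, h) − q_n(h)| ≤ D ε_n²; and (c) μ_n^{ω}(R_n) ≥ c·exp(−C′ n ε_n²) and μ_n^{ω}(R_n ∖ S_n) ≤ C·exp(−B n ε_n²); and assume (d) sup_{h ∈ S_n} q_n(h) ≤ D ε_n² for all n. For ω with ∫_H exp(−(n/2) Q̃_n(ω, h)) dμ_n^{ω}(h) > 0, define the quasi-Bayes posterior ν_n^{ω}(A) = ∫_A exp(−(n/2) Q̃_n(ω,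 h)) dμ_n^{ω}(h) / ∫_H exp(−(n/2) Q̃_n(ω, h)) dμ_n^{ω}(h). Then the denominator is strictly positive with ℙ-probability tending to one, and there exists a constant L > 0 such that ν_n^{ω}( { h ∈ H : Q̃_n(ω, h) > L ε_n² } ) → 0 in ℙ-probability as n → ∞. -/
open MeasureTheory ProbabilityTheory Filter

/-- **Generic weak contraction theorem for quasi-Bayes posteriors.**
Under the sampling-uncertainty, bias and prior small-ball assumptions (a)–(d),
the quasi-Bayes normalizing constant is strictly positive with probability tending
to one, and there is a constant `L > 0` such that the quasi-Bayes posterior mass of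
`{h : Q̃_n(ω,h) > L ε_n²}` tends to zero in outer probability. -/
theorem quasi_bayes_weak_contraction
    {Ω H : Type*} [MeasurableSpace Ω] [MeasurableSpace H]
    (Pr : Measure Ω) [IsProbabilityMeasure Pr]
    (ε : ℕ → ℝ) (hεpos : ∀ n, 0 < ε n)
    (hε0 : Tendsto ε atTop (nhds 0))
    (hεinf : Tendsto (fun n : ℕ => (n : ℝ) * ε n ^ 2) atTop atTop)
    (κ : ℕ → Kernel Ω H) (hκ : ∀ n, IsMarkovKernel (κ n))
    (Qt Q : ℕ → Ω → H → ℝ)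
    (hQtmeas : ∀ n, Measurable (fun p : Ω × H => Qt n p.1 p.2))
    (hQmeas : ∀ n, Measurable (fun p : Ω × H => Q n p.1 p.2))
    (hQtnn : ∀ n ω h, 0 ≤ Qt n ω h) (hQnn : ∀ n ω h, 0 ≤ Q n ω h)
    (q : ℕ → H → ℝ) (hqmeas : ∀ n, Measurable (q n)) (hqnn : ∀ n h, 0 ≤ q n h)
    (S R : ℕ → Set H) (hSR : ∀ n, S n ⊆ R n)
    (hSmeas : ∀ n, MeasurableSet (S n)) (hRmeas : ∀ n, MeasurableSet (R n))
    (D₀ D c C C' B : ℝ)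
    (hD₀ : 0 < D₀) (hD : 0 < D) (hc : 0 < c) (hC : 0 < C)
    (hC' : 0 < C') (hB : C' < B)
    (A : ℕ → Set Ω) (hAmeas : ∀ n, MeasurableSet (A n))
    (hA : Tendsto (fun n => (Pr (A n)).toReal) atTop (nhds 1))
    (ha : ∀ n, ∀ ω ∈ A n, ∀ h ∈ S n, Qt n ω h ≤ D₀ * Q n ω h)
    (hb : ∀ n, ∀ ω ∈ A n, ∀ h ∈ S n, |Q n ω h - q n h| ≤ D * ε n ^ 2)
    (hc1 : ∀ n, ∀ ω ∈ A n, c * Real.exp (-C' * n * ε n ^ 2) ≤ ((κ n ω) (R n)).toReal)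
    (hc2 : ∀ n, ∀ ω ∈ A n, ((κ n ω) (R n \ S n)).toReal ≤ C * Real.exp (-B * n * ε n ^ 2))
    (hd : ∀ n, ∀ h ∈ S n, q n h ≤ D * ε n ^ 2) :
    Tendsto (fun n =>
        (Pr {ω | 0 < ∫ h, Real.exp (-(n / 2 : ℝ) * Qt n ω h) ∂(κ n ω)}).toReal)
      atTop (nhds 1) ∧
    ∃ L : ℝ, 0 < L ∧
      TendstoInMeasure Pr
        (fun n ω =>
          (∫ h in {h | L * ε n ^ 2 < Qt n ω h}, Real.exp (-(n / 2 : ℝ) * Qt n ω h) ∂(κ n ω))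
            / (∫ h, Real.exp (-(n / 2 : ℝ) * Qt n ω h) ∂(κ n ω)))
        atTop (fun _ => 0) := by
  classical
  -- measurability of the integrand in h
  have hsec : ∀ (n : ℕ) (ω : Ω), Measurable (fun h : H => Qt n ω h) := fun n ω =>
    (hQtmeas n).comp measurable_prodMk_left
  have hfmeas : ∀ (n : ℕ) (ω : Ω),
      Measurable (fun h : H => Real.exp (-(n / 2 : ℝ) * Qt n ω h)) := fun n ω =>
    (((hsec n ω).const_mul _)).exp
  have hfle1 : ∀ (n : ℕ) (ω : Ω) (h : H), Real.exp (-(n / 2 : ℝ) * Qt n ω h) ≤ 1 := by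
    intro n ω h
    refine Real.exp_le_one_iff.2 ?_
    have h1 : (0:ℝ) ≤ (n:ℝ) / 2 := by positivity
    nlinarith [hQtnn n ω h]
  have hfint : ∀ (n : ℕ) (ω : Ω),
      Integrable (fun h : H => Real.exp (-(n / 2 : ℝ) * Qt n ω h)) (κ n ω) := by
    intro n ω
    haveI := hκ n
    refine (integrable_const (1:ℝ)).mono' (hfmeas n ω).aestronglyMeasurable ?_
    refine ae_of_all _ fun h => ?_
    rw [Real.norm_eq_abs, abs_of_nonneg (Real.exp_nonneg _)]
    exact hfle1 n ω h
  -- (a)+(b)+(d):  Qt ≤ 2 D₀ D ε² on S n, for ω ∈ A n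
  have hQtS : ∀ n, ∀ ω ∈ A n, ∀ h ∈ S n, Qt n ω h ≤ 2 * D₀ * D * ε n ^ 2 := by
    intro n ω hω h hh
    have h1 := ha n ω hω h hh
    have h2 := (abs_le.1 (hb n ω hω h hh)).2
    have h3 := hd n h hh
    nlinarith [hQnn n ω h, hqnn n h]
  -- denominator lower bound in terms of the prior mass of S n
  have hZS : ∀ n, ∀ ω ∈ A n,
      Real.exp (-(D₀ * D) * ((n:ℝ) * ε n ^ 2)) * ((κ n ω) (S n)).toReal ≤
        ∫ h, Real.exp (-(n / 2 : ℝ) * Qt n ω h) ∂(κ n ω) := by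
    intro n ω hω
    haveI := hκ n
    have hint := hfint n ω
    have h1 : ∫ _h in S n, Real.exp (-(D₀ * D) * ((n:ℝ) * ε n ^ 2)) ∂(κ n ω) ≤
        ∫ h in S n, Real.exp (-(n / 2 : ℝ) * Qt n ω h) ∂(κ n ω) := by
      refine setIntegral_mono_on (integrableOn_const (measure_ne_top _ _))
        hint.integrableOn (hSmeas n) ?_
      intro h hh
      refine Real.exp_le_exp.2 ?_
      have h2 := hQtS n ω hω h hh
      have h3 : (0:ℝ) ≤ (n:ℝ) / 2 := by positivity
      nlinarith [hQtnn n ω h, mul_nonneg h3 (sub_nonneg.2 h2)]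
    have h2 : ∫ _h in S n, Real.exp (-(D₀ * D) * ((n:ℝ) * ε n ^ 2)) ∂(κ n ω) =
        ((κ n ω) (S n)).toReal * Real.exp (-(D₀ * D) * ((n:ℝ) * ε n ^ 2)) := by
      rw [setIntegral_const, smul_eq_mul, measureReal_def]
    calc Real.exp (-(D₀ * D) * ((n:ℝ) * ε n ^ 2)) * ((κ n ω) (S n)).toReal
        = ∫ _h in S n, Real.exp (-(D₀ * D) * ((n:ℝ) * ε n ^ 2)) ∂(κ n ω) := by
          rw [h2, mul_comm]
      _ ≤ ∫ h in S n, Real.exp (-(n / 2 : ℝ) * Qt n ω h) ∂(κ n ω) := h1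
      _ ≤ ∫ h, Real.exp (-(n / 2 : ℝ) * Qt n ω h) ∂(κ n ω) :=
          setIntegral_le_integral hint (ae_of_all _ fun h => Real.exp_nonneg _)
  -- eventually C e^{-Bnε²} ≤ (c/2) e^{-C'nε²}
  have hev : ∀ᶠ n in atTop,
      C * Real.exp (-B * n * ε n ^ 2) ≤ c / 2 * Real.exp (-C' * n * ε n ^ 2) := by
    have h1 : Tendsto (fun n : ℕ => -((B - C') * ((n:ℝ) * ε n ^ 2))) atTop atBot :=
      tendsto_neg_atBot_iff.2 (hεinf.const_mul_atTop (sub_pos.2 hB))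
    have h2 : Tendsto (fun n : ℕ => C * Real.exp (-((B - C') * ((n:ℝ) * ε n ^ 2))))
        atTop (nhds 0) := by
      have := (Real.tendsto_exp_atBot.comp h1).const_mul C
      simpa using this
    filter_upwards [h2.eventually (gt_mem_nhds (by positivity : (0:ℝ) < c / 2))] with n hn
    have hsplit : Real.exp (-B * n * ε n ^ 2) =
        Real.exp (-((B - C') * ((n:ℝ) * ε n ^ 2))) * Real.exp (-C' * n * ε n ^ 2) := by
      rw [← Real.exp_add]; congr 1; ring
    rw [hsplit, ← mul_assoc]
    exact mul_le_mul_of_nonneg_right hn.le (Real.exp_nonneg _)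
  -- eventually the prior mass of S n is large on A n
  have hκS : ∀ᶠ n in atTop, ∀ ω ∈ A n,
      c / 2 * Real.exp (-C' * n * ε n ^ 2) ≤ ((κ n ω) (S n)).toReal := by
    filter_upwards [hev] with n hn ω hω
    haveI := hκ n
    have h1 : (κ n ω) (R n) ≤ (κ n ω) (S n) + (κ n ω) (R n \ S n) := by
      calc (κ n ω) (R n) ≤ (κ n ω) (S n ∪ (R n \ S n)) := by
            refine measure_mono fun x hx => ?_
            by_cases hxs : x ∈ S n
            · exact Or.inl hxs
            · exact Or.inr ⟨hx, hxs⟩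
        _ ≤ _ := measure_union_le _ _
    have h2 : ((κ n ω) (R n)).toReal ≤
        ((κ n ω) (S n)).toReal + ((κ n ω) (R n \ S n)).toReal := by
      rw [← ENNReal.toReal_add (measure_ne_top _ _) (measure_ne_top _ _)]
      exact ENNReal.toReal_mono
        (ENNReal.add_ne_top.2 ⟨measure_ne_top _ _, measure_ne_top _ _⟩) h1
    have h3 := hc1 n ω hω
    have h4 := hc2 n ω hω
    linarith
  -- eventual lower bound on the normalizing constant
  have hZ : ∀ᶠ n in atTop, ∀ ω ∈ A n,
      c / 2 * Real.exp (-(C' + D₀ * D) * ((n:ℝ) * ε n ^ 2)) ≤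
        ∫ h, Real.exp (-(n / 2 : ℝ) * Qt n ω h) ∂(κ n ω) := by
    filter_upwards [hκS] with n hn ω hω
    have h1 := hZS n ω hω
    have h2 := hn ω hω
    have h3 : c / 2 * Real.exp (-(C' + D₀ * D) * ((n:ℝ) * ε n ^ 2)) =
        Real.exp (-(D₀ * D) * ((n:ℝ) * ε n ^ 2)) *
          (c / 2 * Real.exp (-C' * n * ε n ^ 2)) := by
      rw [show Real.exp (-(C' + D₀ * D) * ((n:ℝ) * ε n ^ 2)) =
          Real.exp (-(D₀ * D) * ((n:ℝ) * ε n ^ 2)) * Real.exp (-C' * n * ε n ^ 2) from by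
        rw [← Real.exp_add]; congr 1; ring]
      ring
    rw [h3]
    exact le_trans (mul_le_mul_of_nonneg_left h2 (Real.exp_nonneg _)) h1
  have hZpos : ∀ᶠ n in atTop, ∀ ω ∈ A n,
      0 < ∫ h, Real.exp (-(n / 2 : ℝ) * Qt n ω h) ∂(κ n ω) := by
    filter_upwards [hZ] with n hn ω hω
    exact lt_of_lt_of_le (by positivity) (hn ω hω)
  -- first conclusion
  have concl1 : Tendsto (fun n =>
      (Pr {ω | 0 < ∫ h, Real.exp (-(n / 2 : ℝ) * Qt n ω h) ∂(κ n ω)}).toReal)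
      atTop (nhds 1) := by
    refine tendsto_of_tendsto_of_tendsto_of_le_of_le' hA tendsto_const_nhds ?_ ?_
    · filter_upwards [hZpos] with n hn
      exact ENNReal.toReal_mono (measure_ne_top _ _) (measure_mono fun ω hω => hn ω hω)
    · refine Eventually.of_forall fun n => ?_
      simpa using ENNReal.toReal_mono ENNReal.one_ne_top prob_le_one
  refine ⟨concl1, 2 * (C' + D₀ * D + 1), by positivity, ?_⟩
  -- numerator upper bound
  have hnum : ∀ (n : ℕ) (ω : Ω),
      ∫ h in {h | 2 * (C' + D₀ * D + 1) * ε n ^ 2 < Qt n ω h},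
          Real.exp (-(n / 2 : ℝ) * Qt n ω h) ∂(κ n ω) ≤
        Real.exp (-(C' + D₀ * D + 1) * ((n:ℝ) * ε n ^ 2)) := by
    intro n ω
    haveI := hκ n
    have hTm : MeasurableSet {h | 2 * (C' + D₀ * D + 1) * ε n ^ 2 < Qt n ω h} :=
      measurableSet_lt measurable_const (hsec n ω)
    calc ∫ h in {h | 2 * (C' + D₀ * D + 1) * ε n ^ 2 < Qt n ω h},
            Real.exp (-(n / 2 : ℝ) * Qt n ω h) ∂(κ n ω)
        ≤ ∫ _h in {h | 2 * (C' + D₀ * D + 1) * ε n ^ 2 < Qt n ω h},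
            Real.exp (-(C' + D₀ * D + 1) * ((n:ℝ) * ε n ^ 2)) ∂(κ n ω) := by
          refine setIntegral_mono_on (hfint n ω).integrableOn
            (integrableOn_const (measure_ne_top _ _)) hTm ?_
          intro h hh
          refine Real.exp_le_exp.2 ?_
          have h1 : 2 * (C' + D₀ * D + 1) * ε n ^ 2 ≤ Qt n ω h := le_of_lt hh
          have h2 : (0:ℝ) ≤ (n:ℝ) / 2 := by positivity
          nlinarith [mul_nonneg h2 (sub_nonneg.2 h1)]
      _ = ((κ n ω) {h | 2 * (C' + D₀ * D + 1) * ε n ^ 2 < Qt n ω h}).toReal *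
            Real.exp (-(C' + D₀ * D + 1) * ((n:ℝ) * ε n ^ 2)) := by
          rw [setIntegral_const, smul_eq_mul, measureReal_def]
      _ ≤ 1 * Real.exp (-(C' + D₀ * D + 1) * ((n:ℝ) * ε n ^ 2)) := by
          refine mul_le_mul_of_nonneg_right ?_ (Real.exp_nonneg _)
          simpa using ENNReal.toReal_mono ENNReal.one_ne_top prob_le_one
      _ = Real.exp (-(C' + D₀ * D + 1) * ((n:ℝ) * ε n ^ 2)) := one_mul _
  -- the key ratio identity
  have key : ∀ T : ℝ,
      Real.exp (-(C' + D₀ * D + 1) * T) / (c / 2 * Real.exp (-(C' + D₀ * D) * T)) =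
        2 / c * Real.exp (-T) := by
    intro T
    have h1 : Real.exp (-(C' + D₀ * D + 1) * T) =
        Real.exp (-T) * Real.exp (-(C' + D₀ * D) * T) := by
      rw [← Real.exp_add]; congr 1; ring
    rw [h1]
    rw [div_eq_iff (by positivity : c / 2 * Real.exp (-(C' + D₀ * D) * T) ≠ 0)]
    field_simp
  -- eventual ratio bound on A n
  have hratio : ∀ᶠ n in atTop, ∀ ω ∈ A n,
      0 ≤ (∫ h in {h | 2 * (C' + D₀ * D + 1) * ε n ^ 2 < Qt n ω h},
            Real.exp (-(n / 2 : ℝ) * Qt n ω h) ∂(κ n ω)) /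
          (∫ h, Real.exp (-(n / 2 : ℝ) * Qt n ω h) ∂(κ n ω)) ∧
      (∫ h in {h | 2 * (C' + D₀ * D + 1) * ε n ^ 2 < Qt n ω h},
            Real.exp (-(n / 2 : ℝ) * Qt n ω h) ∂(κ n ω)) /
          (∫ h, Real.exp (-(n / 2 : ℝ) * Qt n ω h) ∂(κ n ω)) ≤
        2 / c * Real.exp (-((n:ℝ) * ε n ^ 2)) := by
    filter_upwards [hZ, hZpos] with n hn hp ω hω
    have hden := hn ω hω
    have hdenpos := hp ω hω
    have hnumnn : 0 ≤ ∫ h in {h | 2 * (C' + D₀ * D + 1) * ε n ^ 2 < Qt n ω h},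
        Real.exp (-(n / 2 : ℝ) * Qt n ω h) ∂(κ n ω) :=
      setIntegral_nonneg (measurableSet_lt measurable_const (hsec n ω))
        (fun h _ => Real.exp_nonneg _)
    constructor
    · exact div_nonneg hnumnn hdenpos.le
    · calc (∫ h in {h | 2 * (C' + D₀ * D + 1) * ε n ^ 2 < Qt n ω h},
              Real.exp (-(n / 2 : ℝ) * Qt n ω h) ∂(κ n ω)) /
            (∫ h, Real.exp (-(n / 2 : ℝ) * Qt n ω h) ∂(κ n ω))
          ≤ Real.exp (-(C' + D₀ * D + 1) * ((n:ℝ) * ε n ^ 2)) /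
            (c / 2 * Real.exp (-(C' + D₀ * D) * ((n:ℝ) * ε n ^ 2))) := by
            exact div_le_div₀ (Real.exp_nonneg _) (hnum n ω) (by positivity) hden
        _ = 2 / c * Real.exp (-((n:ℝ) * ε n ^ 2)) := key _
  -- the bound tends to zero
  have hbound0 : Tendsto (fun n : ℕ => 2 / c * Real.exp (-((n:ℝ) * ε n ^ 2)))
      atTop (nhds 0) := by
    have h1 : Tendsto (fun n : ℕ => -((n:ℝ) * ε n ^ 2)) atTop atBot :=
      tendsto_neg_atBot_iff.2 hεinf
    have := (Real.tendsto_exp_atBot.comp h1).const_mul (2 / c)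
    simpa using this
  -- Pr (A n)ᶜ → 0 in ℝ≥0∞
  have hAc : Tendsto (fun n => Pr (A n)ᶜ) atTop (nhds 0) := by
    have h1 : ∀ n, Pr (A n)ᶜ = ENNReal.ofReal (1 - (Pr (A n)).toReal) := by
      intro n
      rw [prob_compl_eq_one_sub (hAmeas n),
        ← ENNReal.ofReal_toReal (ENNReal.sub_ne_top ENNReal.one_ne_top)]
      congr 1
      rw [ENNReal.toReal_sub_of_le prob_le_one ENNReal.one_ne_top, ENNReal.toReal_one]
    simp_rw [h1]
    have h2 : Tendsto (fun n => 1 - (Pr (A n)).toReal) atTop (nhds 0) := by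
      have := hA.const_sub 1
      simpa using this
    have := (ENNReal.continuous_ofReal.tendsto 0).comp h2
    simpa using (show Tendsto (fun n => ENNReal.ofReal (1 - (Pr (A n)).toReal)) atTop (nhds (ENNReal.ofReal 0)) from this)
  -- conclude TendstoInMeasure
  rw [tendstoInMeasure_iff_dist]
  intro δ hδ
  refine tendsto_of_tendsto_of_tendsto_of_le_of_le' tendsto_const_nhds hAc
    (Eventually.of_forall fun n => zero_le') ?_
  have hsmall : ∀ᶠ n : ℕ in atTop, 2 / c * Real.exp (-((n:ℝ) * ε n ^ 2)) < δ :=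
    hbound0.eventually (gt_mem_nhds hδ)
  filter_upwards [hratio, hsmall] with n hn hs
  refine measure_mono fun ω hω => ?_
  intro hωA
  have h1 := hn ω hωA
  have h2 : dist ((∫ h in {h | 2 * (C' + D₀ * D + 1) * ε n ^ 2 < Qt n ω h},
        Real.exp (-(n / 2 : ℝ) * Qt n ω h) ∂(κ n ω)) /
      (∫ h, Real.exp (-(n / 2 : ℝ) * Qt n ω h) ∂(κ n ω))) 0 < δ := by
    rw [Real.dist_eq, sub_zero, abs_of_nonneg h1.1]
    exact lt_of_le_of_lt h1.2 hs
  exact absurd hω (not_le.2 h2)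
end

section
/- Let 𝐇 be a separable real Hilbert space, ν a Borel probability measure on 𝐇, and h₀ ∈ 𝐇. Let δ > 0, L̄ > 0 and a > 0 be such that ν( { h : ‖h − h₀‖ > L δ } ) ≤ exp(−a L) for every real L ≥ L̄. Then the series Σ_{j=1}^∞ (j+1)² exp(−a j L̄) converges, ∫_𝐇 ‖h − h₀‖² dν(h) ≤ L̄² δ² ( 1 + Σ_{j=1}^∞ (j+1)² exp(−a j L̄) ), the identity map is Bochner ν-integrable, and the mean h̄ = ∫_𝐇 h dν(h) satisfies ‖h̄ − h₀‖² ≤ L̄² δ² ( 1 + Σ_{j=1}^∞ (j+1)² exp(−a j L̄) ). -/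
open MeasureTheory
open scoped ENNReal

/-- **Slicing bound for the posterior mean.**
Let `ν` be a Borel probability measure on a separable real Hilbert space `E` and
`h₀ ∈ E`. If `ν(‖h − h₀‖ > Lδ) ≤ exp(−aL)` for all `L ≥ L̄`, then the series
`∑_{j≥1} (j+1)² exp(−ajL̄)` converges, the second moment satisfies
`∫‖h − h₀‖² dν ≤ L̄²δ²(1 + ∑_{j≥1}(j+1)² e^{−ajL̄})`, the identity map is Bochner
`ν`-integrable, and the mean `h̄ = ∫ h dν` satisfies the same bound on `‖h̄ − h₀‖²`. -/
theorem posterior_mean_slicing_bound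
    {E : Type*} [NormedAddCommGroup E] [InnerProductSpace ℝ E] [CompleteSpace E]
    [TopologicalSpace.SeparableSpace E] [MeasurableSpace E] [BorelSpace E]
    (ν : Measure E) [IsProbabilityMeasure ν] (h₀ : E)
    (δ Lb a : ℝ) (hδ : 0 < δ) (hLb : 0 < Lb) (ha : 0 < a)
    (htail : ∀ L : ℝ, Lb ≤ L →
      ν {h | L * δ < ‖h - h₀‖} ≤ ENNReal.ofReal (Real.exp (-(a * L)))) :
    Summable (fun j : ℕ => ((j : ℝ) + 2) ^ 2 * Real.exp (-(a * ((j : ℝ) + 1) * Lb))) ∧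
    (∫⁻ h, ENNReal.ofReal (‖h - h₀‖ ^ 2) ∂ν
      ≤ ENNReal.ofReal (Lb ^ 2 * δ ^ 2 *
          (1 + ∑' j : ℕ, ((j : ℝ) + 2) ^ 2 * Real.exp (-(a * ((j : ℝ) + 1) * Lb))))) ∧
    Integrable (fun h : E => h) ν ∧
    ‖(∫ h, h ∂ν) - h₀‖ ^ 2
      ≤ Lb ^ 2 * δ ^ 2 *
          (1 + ∑' j : ℕ, ((j : ℝ) + 2) ^ 2 * Real.exp (-(a * ((j : ℝ) + 1) * Lb))) := by
  set S : ℕ → ℝ := fun j : ℕ => ((j : ℝ) + 2) ^ 2 * Real.exp (-(a * ((j : ℝ) + 1) * Lb))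
    with hSdef
  -- Part 1: summability
  have hsum : Summable S := by
    set r : ℝ := Real.exp (-(a * Lb)) with hrdef
    have hr0 : 0 < r := Real.exp_pos _
    have hr1 : ‖r‖ < 1 := by
      rw [Real.norm_eq_abs, abs_of_pos hr0]
      exact Real.exp_lt_one_iff.2 (by nlinarith)
    have hexp : ∀ j : ℕ, Real.exp (-(a * ((j : ℝ) + 1) * Lb)) = r ^ (j + 1) := by
      intro j
      rw [hrdef, ← Real.exp_nat_mul]
      congr 1
      push_cast
      ring
    have h1 : Summable (fun n : ℕ => (n : ℝ) ^ 2 * r ^ n) :=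
      summable_pow_mul_geometric_of_norm_lt_one 2 hr1
    have h2 : Summable (fun j : ℕ => ((j : ℝ) + 2) ^ 2 * r ^ (j + 2)) := by
      have := (summable_nat_add_iff 2).2 h1
      refine this.congr fun j => ?_
      push_cast
      ring
    refine ((h2.mul_left r⁻¹).congr fun j => ?_)
    simp only [hSdef, hexp]
    field_simp
    ring
  have hSnonneg : ∀ j, 0 ≤ S j := fun j =>
    mul_nonneg (by positivity) (Real.exp_nonneg _)
  have hTnonneg : 0 ≤ ∑' j, S j := tsum_nonneg hSnonneg
  set T : ℝ := ∑' j, S j with hTdef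
  have hBnonneg : 0 ≤ Lb ^ 2 * δ ^ 2 * (1 + T) := by positivity
  -- Part 2: second moment bound
  have hLδ : 0 < Lb * δ := mul_pos hLb hδ
  set c : ℕ → ℝ≥0∞ := fun j => ENNReal.ofReal ((((j : ℝ) + 1) * Lb * δ) ^ 2) with hcdef
  set A : ℕ → Set E :=
    fun j => {h | (j : ℝ) * Lb * δ < ‖h - h₀‖ ∧ ‖h - h₀‖ ≤ ((j : ℝ) + 1) * Lb * δ} with hAdef
  have hnormmeas : Measurable fun h : E => ‖h - h₀‖ := (measurable_id.sub_const h₀).norm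
  have hAmeas : ∀ j, MeasurableSet (A j) := fun j =>
    (measurableSet_lt measurable_const hnormmeas).inter
      (measurableSet_le hnormmeas measurable_const)
  have hpt : ∀ h : E,
      ENNReal.ofReal (‖h - h₀‖ ^ 2) ≤ ∑' j, (A j).indicator (fun _ => c j) h := by
    intro h
    rcases eq_or_lt_of_le (norm_nonneg (h - h₀)) with h0 | h0
    · simp [← h0]
    · have ht : 0 < ‖h - h₀‖ / (Lb * δ) := div_pos h0 hLδ
      obtain ⟨j, hj⟩ : ∃ j, ⌈‖h - h₀‖ / (Lb * δ)⌉₊ = j + 1 :=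
        ⟨⌈‖h - h₀‖ / (Lb * δ)⌉₊ - 1,
          (Nat.succ_pred_eq_of_pos (Nat.one_le_ceil_iff.2 ht)).symm⟩
      have hmem : h ∈ A j := by
        constructor
        · have hlt : (j : ℝ) < ‖h - h₀‖ / (Lb * δ) := Nat.lt_ceil.1 (by omega)
          have := (lt_div_iff₀ hLδ).1 hlt
          linarith [this]
        · have hle : ‖h - h₀‖ / (Lb * δ) ≤ ((j : ℝ) + 1) := by
            have := Nat.le_ceil (‖h - h₀‖ / (Lb * δ))
            rw [hj] at this
            push_cast at this
            linarith
          have := (div_le_iff₀ hLδ).1 hle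
          linarith [this]
      calc ENNReal.ofReal (‖h - h₀‖ ^ 2) ≤ c j := by
            apply ENNReal.ofReal_le_ofReal
            have h2 := hmem.2
            have hnn : (0:ℝ) ≤ ‖h - h₀‖ := norm_nonneg _
            nlinarith
        _ = (A j).indicator (fun _ => c j) h := (Set.indicator_of_mem hmem (fun _ => c j)).symm
        _ ≤ ∑' i, (A i).indicator (fun _ => c i) h := ENNReal.le_tsum j
  have hlint : ∫⁻ h, ENNReal.ofReal (‖h - h₀‖ ^ 2) ∂ν ≤ ∑' j, c j * ν (A j) := by
    calc ∫⁻ h, ENNReal.ofReal (‖h - h₀‖ ^ 2) ∂ν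
        ≤ ∫⁻ h, ∑' j, (A j).indicator (fun _ => c j) h ∂ν := lintegral_mono hpt
      _ = ∑' j, ∫⁻ h, (A j).indicator (fun _ => c j) h ∂ν :=
          lintegral_tsum (fun j => (measurable_const.indicator (hAmeas j)).aemeasurable)
      _ = ∑' j, c j * ν (A j) := by
          refine tsum_congr fun j => ?_
          rw [lintegral_indicator_const (hAmeas j)]
  have htailA : ∀ j : ℕ, ν (A (j + 1)) ≤ ENNReal.ofReal (Real.exp (-(a * ((j : ℝ) + 1) * Lb))) := by
    intro j
    have hL : Lb ≤ ((j : ℝ) + 1) * Lb := by nlinarith [Nat.cast_nonneg (α := ℝ) j]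
    refine le_trans (measure_mono ?_) (le_trans (htail (((j : ℝ) + 1) * Lb) hL) ?_)
    · intro h hh
      have := hh.1
      simp only [Set.mem_setOf_eq]
      push_cast at this ⊢
      linarith
    · apply ENNReal.ofReal_le_ofReal
      apply Real.exp_le_exp.2
      nlinarith [Nat.cast_nonneg (α := ℝ) j]
  have hsum2 : ∑' j, c j * ν (A j) ≤ ENNReal.ofReal (Lb ^ 2 * δ ^ 2 * (1 + T)) := by
    rw [tsum_eq_zero_add' ENNReal.summable]
    have hc0 : c 0 * ν (A 0) ≤ ENNReal.ofReal (Lb ^ 2 * δ ^ 2) := by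
      calc c 0 * ν (A 0) ≤ c 0 * 1 := mul_le_mul_right prob_le_one _
        _ = ENNReal.ofReal (Lb ^ 2 * δ ^ 2) := by
            rw [mul_one, hcdef]
            norm_num
            ring_nf
    have hcj : ∀ j : ℕ, c (j + 1) * ν (A (j + 1)) ≤ ENNReal.ofReal (Lb ^ 2 * δ ^ 2 * S j) := by
      intro j
      calc c (j + 1) * ν (A (j + 1))
          ≤ c (j + 1) * ENNReal.ofReal (Real.exp (-(a * ((j : ℝ) + 1) * Lb))) :=
            mul_le_mul_right (htailA j) _
        _ = ENNReal.ofReal (Lb ^ 2 * δ ^ 2 * S j) := by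
            rw [hcdef, ← ENNReal.ofReal_mul (by positivity)]
            congr 1
            simp only [hSdef]
            push_cast
            ring
    calc c 0 * ν (A 0) + ∑' j, c (j + 1) * ν (A (j + 1))
        ≤ ENNReal.ofReal (Lb ^ 2 * δ ^ 2) + ∑' j, ENNReal.ofReal (Lb ^ 2 * δ ^ 2 * S j) :=
          add_le_add hc0 (ENNReal.tsum_le_tsum hcj)
      _ = ENNReal.ofReal (Lb ^ 2 * δ ^ 2 * (1 + T)) := by
          rw [← ENNReal.ofReal_tsum_of_nonneg (fun j => by positivity) (hsum.mul_left _),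
            ← ENNReal.ofReal_add (by positivity) (tsum_nonneg fun j => by positivity)]
          congr 1
          rw [tsum_mul_left]
          ring
  have hpart2 : ∫⁻ h, ENNReal.ofReal (‖h - h₀‖ ^ 2) ∂ν
      ≤ ENNReal.ofReal (Lb ^ 2 * δ ^ 2 * (1 + T)) := hlint.trans hsum2
  -- Part 3: integrability
  have hfin : ∫⁻ h, ENNReal.ofReal (‖h - h₀‖ ^ 2) ∂ν < ⊤ :=
    lt_of_le_of_lt hpart2 ENNReal.ofReal_lt_top
  have hsub : Integrable (fun h : E => h - h₀) ν := by
    refine ⟨(measurable_id.sub_const h₀).aestronglyMeasurable, ?_⟩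
    rw [hasFiniteIntegral_iff_norm]
    calc ∫⁻ h, ENNReal.ofReal ‖h - h₀‖ ∂ν
        ≤ ∫⁻ h, 1 + ENNReal.ofReal (‖h - h₀‖ ^ 2) ∂ν := by
          apply lintegral_mono
          intro h
          have hnn : (0:ℝ) ≤ ‖h - h₀‖ := norm_nonneg _
          calc ENNReal.ofReal ‖h - h₀‖ ≤ ENNReal.ofReal (1 + ‖h - h₀‖ ^ 2) :=
                ENNReal.ofReal_le_ofReal (by nlinarith)
            _ = 1 + ENNReal.ofReal (‖h - h₀‖ ^ 2) := by
                rw [ENNReal.ofReal_add one_pos.le (by positivity), ENNReal.ofReal_one]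
      _ = 1 * ν Set.univ + ∫⁻ h, ENNReal.ofReal (‖h - h₀‖ ^ 2) ∂ν := by
          rw [lintegral_add_left measurable_const]
          simp
      _ < ⊤ := by
          simp only [one_mul, measure_univ]
          exact ENNReal.add_lt_top.2 ⟨ENNReal.one_lt_top, hfin⟩
  have hint : Integrable (fun h : E => h) ν := by
    have h2 := hsub.add (integrable_const h₀)
    refine h2.congr (Filter.Eventually.of_forall fun h => ?_)
    simp
  refine ⟨hsum, hpart2, hint, ?_⟩
  -- Part 4: bound on the mean
  have hmean : (∫ h, h ∂ν) - h₀ = ∫ h, (h - h₀) ∂ν := by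
    rw [integral_sub hint (integrable_const h₀), integral_const]
    simp
  -- Cauchy–Schwarz in lintegral form
  have hCS : ∫⁻ h, ENNReal.ofReal ‖h - h₀‖ ∂ν
      ≤ (∫⁻ h, ENNReal.ofReal (‖h - h₀‖ ^ 2) ∂ν) ^ (1 / 2 : ℝ) := by
    have hconj : Real.HolderConjugate 2 2 := by
      exact Real.HolderConjugate.two_two
    have := ENNReal.lintegral_mul_le_Lp_mul_Lq ν hconj
      (f := fun h : E => ENNReal.ofReal ‖h - h₀‖) (g := fun _ => 1)
      (hnormmeas.ennreal_ofReal).aemeasurable aemeasurable_const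
    simp only [mul_one, Pi.mul_apply] at this
    calc ∫⁻ h, ENNReal.ofReal ‖h - h₀‖ ∂ν
        ≤ (∫⁻ h, ENNReal.ofReal ‖h - h₀‖ ^ (2 : ℝ) ∂ν) ^ (1 / 2 : ℝ) *
            (∫⁻ _, (1 : ℝ≥0∞) ^ (2 : ℝ) ∂ν) ^ (1 / 2 : ℝ) := this
      _ = (∫⁻ h, ENNReal.ofReal (‖h - h₀‖ ^ 2) ∂ν) ^ (1 / 2 : ℝ) := by
          simp only [ENNReal.one_rpow, lintegral_one, measure_univ, mul_one]
          congr 1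
          apply lintegral_congr
          intro h
          rw [show (2:ℝ) = ((2:ℕ):ℝ) by norm_num, ENNReal.rpow_natCast,
            ← ENNReal.ofReal_pow (norm_nonneg _)]
  have henorm : (‖(∫ h, h ∂ν) - h₀‖₊ : ℝ≥0∞)
      ≤ ENNReal.ofReal (Real.sqrt (Lb ^ 2 * δ ^ 2 * (1 + T))) := by
    rw [hmean]
    calc (‖∫ h, (h - h₀) ∂ν‖₊ : ℝ≥0∞)
        ≤ ∫⁻ h, ‖h - h₀‖₊ ∂ν := enorm_integral_le_lintegral_enorm _
      _ = ∫⁻ h, ENNReal.ofReal ‖h - h₀‖ ∂ν := by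
          simp only [ofReal_norm_eq_enorm, enorm_eq_nnnorm]
      _ ≤ (∫⁻ h, ENNReal.ofReal (‖h - h₀‖ ^ 2) ∂ν) ^ (1 / 2 : ℝ) := hCS
      _ ≤ (ENNReal.ofReal (Lb ^ 2 * δ ^ 2 * (1 + T))) ^ (1 / 2 : ℝ) :=
          ENNReal.rpow_le_rpow hpart2 (by norm_num)
      _ = ENNReal.ofReal (Real.sqrt (Lb ^ 2 * δ ^ 2 * (1 + T))) := by
          rw [ENNReal.ofReal_rpow_of_nonneg hBnonneg (by norm_num),
            ← Real.sqrt_eq_rpow]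
  have hnorm : ‖(∫ h, h ∂ν) - h₀‖ ≤ Real.sqrt (Lb ^ 2 * δ ^ 2 * (1 + T)) := by
    rw [← enorm_eq_nnnorm, ← ofReal_norm_eq_enorm] at henorm
    exact (ENNReal.ofReal_le_ofReal_iff (Real.sqrt_nonneg _)).1 henorm
  calc ‖(∫ h, h ∂ν) - h₀‖ ^ 2
      ≤ Real.sqrt (Lb ^ 2 * δ ^ 2 * (1 + T)) ^ 2 :=
        pow_le_pow_left₀ (norm_nonneg _) hnorm 2
    _ = Lb ^ 2 * δ ^ 2 * (1 + T) := Real.sq_sqrt hBnonneg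
end
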